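/- Let M be a principally Goldie*-lifting module over a ring R with the summand sum property (the sum of any two direct summands of M is again a direct summand of M). Then every direct summand of M is principally Goldie*-lifting. -/

import Mathlib

/-!
Write `M = D ⊕ D'` and let `X ≤ D` be cyclic, so `X β* E` for a direct summand `E` of `M`.
By the summand sum property `E + D'` is a summand of `M`, and by modularity
`N := D ∩ (E + D')` is a summand of `D` with `N + D' = E + D'`. Both halves of `X β* N`
in `D` are statements about submodules `L ≤ D`; passing to `L + D'` turns them into the
corresponding halves of `X β* E` in `M`, which force `L + D' = M` and hence `L = D`.
-/

/-- A submodule `K` is small (superfluous) in `M`: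
`K + N = M` implies `N = M` for all submodules `N`. -/
def IsSmallSub {R M : Type*} [Ring R] [AddCommGroup M] [Module R M]
    (K : Submodule R M) : Prop :=
  ∀ N : Submodule R M, K ⊔ N = ⊤ → N = ⊤

/-- `K` is small in the submodule `N` (where `K ≤ N`):
for every submodule `L ≤ N`, `K + L = N` implies `L = N`. -/
def IsSmallIn {R M : Type*} [Ring R] [AddCommGroup M] [Module R M]
    (K N : Submodule R M) : Prop :=
  ∀ L : Submodule R M, L ≤ N → K ⊔ L = N → L = N

/-- The β* relation: `X β* Y` iff `(X+Y)/X ≪ M/X` and `(X+Y)/Y ≪ M/Y`. -/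
def BetaStar {R M : Type*} [Ring R] [AddCommGroup M] [Module R M]
    (X Y : Submodule R M) : Prop :=
  IsSmallSub ((X ⊔ Y).map X.mkQ) ∧ IsSmallSub ((X ⊔ Y).map Y.mkQ)

/-- A submodule is cyclic if it is generated by a single element. -/
def IsCyclicSub {R M : Type*} [Ring R] [AddCommGroup M] [Module R M]
    (X : Submodule R M) : Prop :=
  ∃ m : M, X = Submodule.span R {m}

/-- A submodule is a direct summand if it has a complement. -/
def IsDirectSummand {R M : Type*} [Ring R] [AddCommGroup M] [Module R M]
    (D : Submodule R M) : Prop :=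
  ∃ D' : Submodule R M, IsCompl D D'

/-- `M` is principally Goldie*-lifting: every cyclic submodule is β* equivalent
to a direct summand. -/
def PrinGStarLifting (R M : Type*) [Ring R] [AddCommGroup M] [Module R M] : Prop :=
  ∀ X : Submodule R M, IsCyclicSub X → ∃ D : Submodule R M, IsDirectSummand D ∧ BetaStar X D

/-- The radical of `M`: the intersection of all maximal proper submodules
(equal to `M` if there are none). -/
def RadSub (R M : Type*) [Ring R] [AddCommGroup M] [Module R M] : Submodule R M :=
  sInf {N : Submodule R M | IsCoatom N}

/-- The lattice form of `(X + Y)/Y ≪ T/Y` (for `Y ≤ T`), read through `L ↦ L/Y`. -/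
def SmallModIn {α : Type*} [Lattice α] (T X Y : α) : Prop :=
  ∀ L ≤ T, Y ≤ L → X ⊔ L = T → L = T

section ModularLattice

variable {α : Type*} [Lattice α] [BoundedOrder α] [IsModularLattice α] {D D' : α}

theorem IsCompl.inf_sup_eq_of_le (hD : IsCompl D D') {A : α} (h : D' ≤ A) :
    D ⊓ A ⊔ D' = A := by
  rw [inf_comm, inf_sup_assoc_of_le _ h, hD.sup_eq_top, inf_top_eq]

theorem IsCompl.exists_isCompl_Iic_inf (hD : IsCompl D D') {A C : α} (hA : IsCompl A C)
    (h : D' ≤ A) : ∃ W : Set.Iic D, IsCompl (⟨D ⊓ A, inf_le_left⟩ : Set.Iic D) W := by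
  refine ⟨⟨D ⊓ (D' ⊔ C), inf_le_left⟩, Set.Iic.isCompl_iff.mpr ⟨?_, ?_⟩⟩
  · have hA' : A ⊓ (D' ⊔ C) = D' := by
      rw [inf_comm, sup_inf_assoc_of_le _ h, inf_comm, hA.inf_eq_bot, sup_bot_eq]
    rw [disjoint_iff, ← hD.inf_eq_bot]
    calc D ⊓ A ⊓ (D ⊓ (D' ⊔ C)) = D ⊓ (A ⊓ (D' ⊔ C)) := by
          rw [inf_inf_inf_comm, inf_idem]
      _ = D ⊓ D' := by rw [hA']
  · calc D ⊓ A ⊔ D ⊓ (D' ⊔ C) = D ⊓ (D ⊓ A ⊔ D' ⊔ C) := by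
          rw [sup_assoc, sup_comm (D ⊓ A) (D' ⊔ C),
            ← inf_sup_assoc_of_le _ (inf_le_left : D ⊓ A ≤ D), sup_comm]
      _ = D := by rw [hD.inf_sup_eq_of_le h, hA.sup_eq_top, inf_top_eq]

theorem SmallModIn.of_isCompl {P Q P' Q' : α} (h : SmallModIn ⊤ P Q) (hD : IsCompl D D')
    (hQ : Q ≤ Q' ⊔ D') (hP : P' ≤ P ⊔ D') : SmallModIn D P' Q' := by
  intro L hLD hQ'L hP'L
  have hL : L ⊔ D' = ⊤ := by
    refine h _ le_top (hQ.trans (sup_le_sup_right hQ'L _)) (top_unique ?_)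
    calc ⊤ = P' ⊔ L ⊔ D' := by rw [hP'L, hD.sup_eq_top]
      _ = P' ⊔ D' ⊔ L := sup_right_comm _ _ _
      _ ≤ P ⊔ D' ⊔ L := sup_le_sup_right (sup_le hP le_sup_right) L
      _ = P ⊔ (L ⊔ D') := by ac_rfl
  exact eq_of_le_of_inf_le_of_sup_le (z := D') hLD (by rw [hD.inf_eq_bot]; exact bot_le)
    (by rw [hL]; exact le_top)

end ModularLattice

section Submodule

variable {R M : Type*} [Ring R] [AddCommGroup M] [Module R M]

theorem isSmallSub_map_mkQ_iff (X Y : Submodule R M) :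
    IsSmallSub ((X ⊔ Y).map Y.mkQ) ↔ SmallModIn ⊤ X Y := by
  constructor
  · intro h L _ hYL hXL
    have hL : L.map Y.mkQ = ⊤ := h _ <| by
      rw [← Submodule.map_sup, sup_assoc, sup_eq_right.mpr hYL, hXL, Submodule.map_top,
        Submodule.range_mkQ]
    simpa [Submodule.comap_map_mkQ, sup_eq_right.mpr hYL] using
      congrArg (Submodule.comap Y.mkQ) hL
  · intro h N hN
    have hYL : Y ≤ N.comap Y.mkQ := Submodule.le_comap_mkQ Y N
    have hmap : (X ⊔ N.comap Y.mkQ).map Y.mkQ = ⊤ := by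
      rw [← sup_eq_right.mpr hYL, ← sup_assoc, Submodule.map_sup,
        Submodule.map_comap_eq_of_surjective Y.mkQ_surjective, hN]
    have hXL : X ⊔ N.comap Y.mkQ = ⊤ := by
      rw [← sup_eq_right.mpr (hYL.trans le_sup_right), ← Submodule.comap_map_mkQ, hmap,
        Submodule.comap_top]
    refine Submodule.comap_injective_of_surjective Y.mkQ_surjective ?_
    rw [h _ le_top hYL hXL, Submodule.comap_top]

theorem betaStar_iff {X Y : Submodule R M} :
    BetaStar X Y ↔ SmallModIn ⊤ Y X ∧ SmallModIn ⊤ X Y := by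
  rw [BetaStar, sup_comm, isSmallSub_map_mkQ_iff, sup_comm, isSmallSub_map_mkQ_iff]

theorem SmallModIn.of_map_subtype {D : Submodule R M} {X Y : Submodule R D}
    (h : SmallModIn D (X.map D.subtype) (Y.map D.subtype)) : SmallModIn ⊤ X Y := by
  intro L _ hYL hXL
  refine D.mapIic.injective (Subtype.ext ?_)
  simp only [Submodule.coe_mapIic_apply, Submodule.map_top, Submodule.range_subtype]
  refine h _ (Submodule.map_subtype_le _ _) (Submodule.map_mono hYL) ?_
  rw [← Submodule.map_sup, hXL, Submodule.map_top, Submodule.range_subtype]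

theorem isDirectSummand_comap_subtype {D A : Submodule R M}
    (h : ∃ W : Set.Iic D, IsCompl (⟨D ⊓ A, Set.mem_Iic.mpr inf_le_left⟩ : Set.Iic D) W) :
    IsDirectSummand (A.comap D.subtype) := by
  obtain ⟨W, hW⟩ := h
  have hA : D.mapIic (A.comap D.subtype) = ⟨D ⊓ A, Set.mem_Iic.mpr inf_le_left⟩ :=
    Subtype.ext (Submodule.map_comap_subtype D A)
  refine ⟨D.mapIic.symm W, D.mapIic.isCompl_iff.mpr ?_⟩
  rwa [D.mapIic.apply_symm_apply, hA]

end Submodule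

/-- If `M` is principally Goldie*-lifting with the summand sum
property, then every direct summand of `M` is principally Goldie*-lifting. -/
theorem stmt_12 {R M : Type*} [Ring R] [AddCommGroup M] [Module R M]
    (hM : PrinGStarLifting R M)
    (hssp : ∀ D₁ D₂ : Submodule R M, IsDirectSummand D₁ → IsDirectSummand D₂ →
      IsDirectSummand (D₁ ⊔ D₂)) :
    ∀ D : Submodule R M, IsDirectSummand D → PrinGStarLifting R D := by
  rintro D ⟨D', hD⟩ _ ⟨d, rfl⟩
  obtain ⟨E, hE, hβ⟩ := hM ((Submodule.span R {d}).map D.subtype)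
    ⟨d, by rw [Submodule.map_span, Set.image_singleton]; rfl⟩
  obtain ⟨C, hC⟩ := hssp E D' hE ⟨D, hD.symm⟩
  have hN : ((E ⊔ D').comap D.subtype).map D.subtype = D ⊓ (E ⊔ D') :=
    Submodule.map_comap_subtype D _
  refine ⟨_, isDirectSummand_comap_subtype (hD.exists_isCompl_Iic_inf hC le_sup_right), ?_⟩
  rw [betaStar_iff] at hβ ⊢
  refine ⟨.of_map_subtype ?_, .of_map_subtype ?_⟩ <;> rw [hN]
  · exact hβ.1.of_isCompl hD le_sup_left inf_le_right
  · exact hβ.2.of_isCompl hD (le_sup_left.trans (hD.inf_sup_eq_of_le le_sup_right).ge)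
      le_sup_left
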